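/- arXiv:1304.0181 — 3 statements merged into one kernel-verified Lean document; each statement's English description precedes it below -/
import Mathlib

section
/- On the projective line over a ring R, the point R(1,0) is radically parallel to a point q if and only if q = R(1,b) for some b in the Jacobson radical of R. Here a point p is radically parallel to q if every point distant to p is also distant to q. -/
open Matrix

/-- A pair `(a, b)` is admissible if it is the first row of an invertible 2×2 matrix. -/
def Admissible {R : Type*} [Ring R] (a b : R) : Prop :=
  ∃ M : Matrix (Fin 2) (Fin 2) R, IsUnit M ∧ M 0 0 = a ∧ M 0 1 = b

/-- The point `R(a,b)` of the projective line over `R`. -/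
def pt (R : Type*) [Ring R] (a b : R) : Submodule R (Fin 2 → R) :=
  Submodule.span R {![a, b]}

/-- The projective line over `R`. -/
def ProjLine (R : Type*) [Ring R] : Set (Submodule R (Fin 2 → R)) :=
  {p | ∃ a b : R, Admissible a b ∧ p = pt R a b}

/-- Two points are distant iff representing admissible pairs form an invertible matrix. -/
def Distant {R : Type*} [Ring R] (p q : Submodule R (Fin 2 → R)) : Prop :=
  ∃ a b c d : R, p = pt R a b ∧ q = pt R c d ∧ IsUnit (!![a, b; c, d])

/-- `p` is radically parallel to `q`: every point distant to `p` is distant to `q`. -/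
def RadParallel {R : Type*} [Ring R] (p q : Submodule R (Fin 2 → R)) : Prop :=
  ∀ x ∈ ProjLine R, Distant x p → Distant x q

/-! Invertibility of `!![a, b; 1, d]` is equivalent, by elementary row operations, to invertibility
of `b - a * d`. Taking `(a, b, d) = (y, 1, b)` shows that `R(y, 1)` is distant to `R(1, b)` exactly
when `1 - y b` is a unit; and every point distant to `R(1, 0)` is `R(a, u)` with `u` a unit, for
which `u - a b = u (1 - u⁻¹ a b)`. So `R(1, b)` is radically parallel to `R(1, 0)` iff `1 - y b` is
a unit for all `y`, i.e. iff `b` lies in the Jacobson radical. Finally, testing against the point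
`R(0, 1)` forces any `q = R(a, b)` radically parallel to `R(1, 0)` to have `a` a unit, so
`q = R(1, a⁻¹ b)`. -/

namespace Matrix

theorem isUnit_diagonal' {n R : Type*} [Fintype n] [DecidableEq n] [Semiring R] {v : n → R} :
    IsUnit (diagonal v) ↔ IsUnit v := by
  refine ⟨fun h => ?_, fun h => h.map (diagonalRingHom n R)⟩
  obtain ⟨N, hvN, hNv⟩ := isUnit_iff_exists.mp h
  refine Pi.isUnit_iff.mpr fun i => isUnit_iff_exists.mpr ⟨N i i, ?_, ?_⟩
  · simpa using congr_fun₂ hvN i i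
  · simpa using congr_fun₂ hNv i i

variable {R : Type*} [Ring R] {a b c d : R}

theorem isUnit_fin_two_diag_iff : IsUnit !![a, 0; 0, d] ↔ IsUnit a ∧ IsUnit d := by
  rw [show !![a, 0; 0, d] = diagonal ![a, d] from (diagonal_fin_two ![a, d]).symm, isUnit_diagonal',
    Pi.isUnit_iff, Fin.forall_fin_two]
  rfl

theorem isUnit_fin_two_unipotent (e : R) : IsUnit !![1, e; 0, 1] :=
  isUnit_iff_exists.mpr ⟨!![1, -e; 0, 1], by simp [one_fin_two], by simp [one_fin_two]⟩

theorem isUnit_fin_two_swap : IsUnit !![(0 : R), 1; 1, 0] :=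
  isUnit_iff_exists.mpr ⟨!![0, 1; 1, 0], by simp [one_fin_two], by simp [one_fin_two]⟩

theorem isUnit_fin_two_swap_rows_iff : IsUnit !![c, d; a, b] ↔ IsUnit !![a, b; c, d] := by
  have : !![c, d; a, b] = !![0, 1; 1, 0] * !![a, b; c, d] := by simp
  rw [this, isUnit_fin_two_swap.mul_left_iff]

theorem isUnit_fin_two_add_mul_row_iff (r : R) :
    IsUnit !![a + r * c, b + r * d; c, d] ↔ IsUnit !![a, b; c, d] := by
  have : !![a + r * c, b + r * d; c, d] = !![1, r; 0, 1] * !![a, b; c, d] := by simp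
  rw [this, (isUnit_fin_two_unipotent r).mul_left_iff]

theorem isUnit_fin_two_upper_one_right_iff (e : R) : IsUnit !![a, e; 0, 1] ↔ IsUnit a := by
  have : !![a, e; 0, 1] = !![1, e; 0, 1] * !![a, 0; 0, 1] := by simp
  rw [this, (isUnit_fin_two_unipotent e).mul_left_iff, isUnit_fin_two_diag_iff]
  simp

theorem isUnit_fin_two_upper_one_left_iff (e : R) : IsUnit !![1, e; 0, d] ↔ IsUnit d := by
  have : !![1, e; 0, d] = !![1, 0; 0, d] * !![1, e; 0, 1] := by simp
  rw [this, (isUnit_fin_two_unipotent e).mul_right_iff, isUnit_fin_two_diag_iff]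
  simp

theorem isUnit_fin_two_lower_left_one_iff : IsUnit !![a, b; 1, d] ↔ IsUnit (b - a * d) := by
  rw [← isUnit_fin_two_add_mul_row_iff (-a), ← isUnit_fin_two_swap_rows_iff]
  simpa [sub_eq_add_neg] using isUnit_fin_two_upper_one_left_iff d

end Matrix

theorem Ideal.mem_jacobson_bot_iff_isUnit_one_sub_mul {R : Type*} [Ring R] {b : R} :
    b ∈ (⊥ : Ideal R).jacobson ↔ ∀ y, IsUnit (1 - y * b) := by
  constructor
  · intro hb
    have left_inv : ∀ y, ∃ z, z * (1 - y * b) = 1 := fun y => by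
      obtain ⟨z, hz⟩ := Ideal.mem_jacobson_iff.mp hb (-y)
      rw [Ideal.mem_bot] at hz
      exact ⟨z, by linear_combination (norm := noncomm_ring) hz⟩
    intro y
    obtain ⟨z, hz⟩ := left_inv y
    -- `z = 1 - (-(z * y)) * b` is itself of the form `1 - y' * b`, so it has a left inverse too
    obtain ⟨w, hw⟩ := left_inv (-(z * y))
    have hwz : w * z = 1 := by
      rw [← hw]; congr 1; linear_combination (norm := noncomm_ring) hz
    rw [left_inv_eq_right_inv hwz hz] at hwz
    exact isUnit_iff_exists.mpr ⟨z, hwz, hz⟩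
  · intro h
    refine Ideal.mem_jacobson_iff.mpr fun y => ?_
    obtain ⟨u, hu⟩ := h (-y)
    have hinv : ↑u⁻¹ * (1 - -y * b) = 1 := by rw [← hu, Units.inv_mul]
    exact ⟨↑u⁻¹, by rw [Ideal.mem_bot]; linear_combination (norm := noncomm_ring) hinv⟩

section ProjectiveLine

variable {R : Type*} [Ring R] {a b c d : R}

theorem admissible_of_isUnit_top (h : IsUnit !![a, b; c, d]) : Admissible a b :=
  ⟨_, h, rfl, rfl⟩

theorem admissible_of_isUnit_bottom (h : IsUnit !![a, b; c, d]) : Admissible c d :=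
  admissible_of_isUnit_top (isUnit_fin_two_swap_rows_iff.mpr h)

theorem Admissible.exists_mul_add_mul_eq_one (h : Admissible a b) :
    ∃ x y, a * x + b * y = 1 := by
  obtain ⟨M, hM, rfl, rfl⟩ := h
  obtain ⟨N, hMN, -⟩ := isUnit_iff_exists.mp hM
  exact ⟨N 0 0, N 1 0, by simpa [mul_apply, Fin.sum_univ_two] using congr_fun₂ hMN 0 0⟩

theorem Admissible.eq_one_of_mul_eq (h : Admissible a b) {r : R} (ha : r * a = a)
    (hb : r * b = b) : r = 1 := by
  obtain ⟨x, y, hxy⟩ := h.exists_mul_add_mul_eq_one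
  calc r = r * (a * x + b * y) := by rw [hxy, mul_one]
    _ = a * x + b * y := by rw [mul_add, ← mul_assoc, ← mul_assoc, ha, hb]
    _ = 1 := hxy

theorem pt_le_pt_iff : pt R a b ≤ pt R c d ↔ ∃ r, a = r * c ∧ b = r * d := by
  simp only [pt, Submodule.span_singleton_le_iff_mem, Submodule.mem_span_singleton, funext_iff,
    Fin.forall_fin_two]
  simp [eq_comm]

theorem pt_units_mul (u : Rˣ) (a b : R) : pt R (u * a) (u * b) = pt R a b := by
  simpa [pt, Units.smul_def] using Submodule.span_singleton_group_smul_eq R u ![a, b]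

theorem Admissible.exists_units_of_pt_eq (hab : Admissible a b) (hcd : Admissible c d)
    (h : pt R a b = pt R c d) : ∃ u : Rˣ, c = u * a ∧ d = u * b := by
  obtain ⟨r, rfl, rfl⟩ := pt_le_pt_iff.mp h.ge
  obtain ⟨s, hsa, hsb⟩ := pt_le_pt_iff.mp h.le
  refine ⟨⟨r, s, hcd.eq_one_of_mul_eq ?_ ?_, hab.eq_one_of_mul_eq ?_ ?_⟩, rfl, rfl⟩ <;>
    simp only [mul_assoc, ← hsa, ← hsb]

theorem distant_pt_pt_iff (hab : Admissible a b) (hcd : Admissible c d) :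
    Distant (pt R a b) (pt R c d) ↔ IsUnit !![a, b; c, d] := by
  refine ⟨fun ⟨a', b', c', d', hab', hcd', hM⟩ => ?_, fun h => ⟨a, b, c, d, rfl, rfl, h⟩⟩
  obtain ⟨u, rfl, rfl⟩ := hab.exists_units_of_pt_eq (admissible_of_isUnit_top hM) hab'
  obtain ⟨v, rfl, rfl⟩ := hcd.exists_units_of_pt_eq (admissible_of_isUnit_bottom hM) hcd'
  have : !![u * a, u * b; v * c, v * d] = !![(u : R), 0; 0, v] * !![a, b; c, d] := by simp
  rwa [this, (isUnit_fin_two_diag_iff.mpr ⟨u.isUnit, v.isUnit⟩).mul_left_iff] at hM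

theorem RadParallel.isUnit_fin_two (h : RadParallel (pt R a b) (pt R c d))
    (hcd : Admissible c d) {x y : R} (hxy : IsUnit !![x, y; a, b]) : IsUnit !![x, y; c, d] :=
  (distant_pt_pt_iff (admissible_of_isUnit_top hxy) hcd).mp
    (h _ ⟨x, y, admissible_of_isUnit_top hxy, rfl⟩ ⟨x, y, a, b, rfl, rfl, hxy⟩)

theorem RadParallel.isUnit_of_infty (h : RadParallel (pt R 1 0) (pt R a b))
    (hab : Admissible a b) : IsUnit a := by
  have := h.isUnit_fin_two hab (x := 0) (y := 1) (isUnit_fin_two_lower_left_one_iff.mpr (by simp))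
  rwa [← isUnit_fin_two_swap_rows_iff, isUnit_fin_two_upper_one_right_iff] at this

theorem radParallel_infty_pt_one_iff :
    RadParallel (pt R 1 0) (pt R 1 b) ↔ b ∈ (⊥ : Ideal R).jacobson := by
  rw [Ideal.mem_jacobson_bot_iff_isUnit_one_sub_mul]
  constructor
  · intro h y
    have := h.isUnit_fin_two (admissible_of_isUnit_top (isUnit_fin_two_unipotent b)) (x := y)
      (y := 1) (isUnit_fin_two_lower_left_one_iff.mpr (by simp))
    rwa [isUnit_fin_two_lower_left_one_iff] at this
  · rintro hb x ⟨c, d, hcd, rfl⟩ hx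
    have hd : IsUnit d := by
      simpa [isUnit_fin_two_lower_left_one_iff] using (distant_pt_pt_iff hcd
        (admissible_of_isUnit_top (isUnit_fin_two_unipotent 0))).mp hx
    obtain ⟨u, rfl⟩ := hd
    refine ⟨c, u, 1, b, rfl, rfl, isUnit_fin_two_lower_left_one_iff.mpr ?_⟩
    have hfactor : ↑u - c * b = u * (1 - ↑u⁻¹ * c * b) := by simp [mul_sub, ← mul_assoc]
    rw [hfactor]
    exact u.isUnit.mul (hb _)

end ProjectiveLine

theorem radParallel_infty_iff_general (R : Type*) [Ring R]
    (q : Submodule R (Fin 2 → R)) (hq : q ∈ ProjLine R) :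
    RadParallel (pt R 1 0) q ↔ ∃ b ∈ (⊥ : Ideal R).jacobson, q = pt R 1 b := by
  constructor
  · intro h
    obtain ⟨a, b, hab, rfl⟩ := hq
    obtain ⟨u, rfl⟩ := h.isUnit_of_infty hab
    have hq : pt R u b = pt R 1 (↑u⁻¹ * b) := by simpa using pt_units_mul u 1 (↑u⁻¹ * b)
    exact ⟨_, radParallel_infty_pt_one_iff.mp (hq ▸ h), hq⟩
  · rintro ⟨b, hb, rfl⟩
    exact radParallel_infty_pt_one_iff.mpr hb

/-- Theorem 1: `R(1,0)` is radically parallel to `q ∈ P(R)` iff `q = R(1,b)`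
for some `b` in the Jacobson radical of `R`. -/
theorem radParallel_infty_iff (R : Type*) [Ring R] [Nontrivial R]
    (q : Submodule R (Fin 2 → R)) (hq : q ∈ ProjLine R) :
    RadParallel (pt R 1 0) q ↔ ∃ b ∈ (⊥ : Ideal R).jacobson, q = pt R 1 b :=
  radParallel_infty_iff_general R q hq
end

section
/- Two points p, q of the projective line over a ring R are radically parallel if and only if their images under the canonical map P(R) → P(R/rad R) coincide. -/
/-! Complete `(a, b)` to an invertible matrix with second row `(a₂, b₂)` and write
`(c, d) = α (a, b) + β (a₂, b₂)`. Every `R(t a + a₂, t b + b₂)` is distant to `R(a, b)`, and it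
is distant to `R(c, d)` exactly when `α - β t` is a unit. If this holds for all `t`, then `α` is
a unit and `β ∈ rad R`, so `(c̄, d̄) = ᾱ (ā, b̄)`. Conversely, if `(c̄, d̄) = w (ā, b̄)` with `w` a
unit, then for every `R(e, f)` distant to `R(a, b)` the reduction of `!![e, f; c, d]` is
invertible, and invertibility lifts from `M₂(R/rad R)` to `M₂(R)` because
`rad M₂(R) = M₂(rad R)`. -/

open Matrix

/-- The factor ring `R/rad R` (the Jacobson radical realized as a two-sided ideal). -/
abbrev RadQuot (R : Type*) [Ring R] :=
  (TwoSidedIdeal.jacobson (⊥ : TwoSidedIdeal R)).ringCon.Quotient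

/-- The canonical epimorphism `R → R/rad R`, `a ↦ ā`. -/
def radQuotMk (R : Type*) [Ring R] : R →+* RadQuot R :=
  (TwoSidedIdeal.jacobson (⊥ : TwoSidedIdeal R)).ringCon.mk'

section Jacobson
variable {R : Type*} [Ring R]

theorem isUnit_one_sub_mul_comm {a b : R} (h : IsUnit (1 - a * b)) : IsUnit (1 - b * a) := by
  obtain ⟨u, hu₁, hu₂⟩ := isUnit_iff_exists.1 h
  refine isUnit_iff_exists.2 ⟨1 + b * u * a, ?_, ?_⟩
  · calc (1 - b * a) * (1 + b * u * a) = 1 - b * a + b * ((1 - a * b) * u) * a := by noncomm_ring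
      _ = 1 := by rw [hu₁]; noncomm_ring
  · calc (1 + b * u * a) * (1 - b * a) = 1 - b * a + b * (u * (1 - a * b)) * a := by noncomm_ring
      _ = 1 := by rw [hu₂]; noncomm_ring

theorem TwoSidedIdeal.isUnit_one_add_of_mem_jacobson_bot {x : R}
    (hx : x ∈ (⊥ : TwoSidedIdeal R).jacobson) : IsUnit (1 + x) := by
  have left_inv : ∀ x ∈ (⊥ : TwoSidedIdeal R).jacobson, ∃ z, z * (1 + x) = 1 := fun x hx ↦ by
    obtain ⟨z, hz⟩ := TwoSidedIdeal.mem_jacobson_iff.1 hx 1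
    exact ⟨z, by rwa [TwoSidedIdeal.mem_bot, sub_eq_zero, mul_one, add_comm, ← mul_one_add] at hz⟩
  obtain ⟨z, hz⟩ := left_inv x hx
  -- `z = 1 - z * x` again lies in `1 + rad R`, so it has a left inverse too, which must be `1 + x`
  obtain ⟨w, hw⟩ := left_inv (-(z * x)) ((⊥ : TwoSidedIdeal R).jacobson.neg_mem
    ((⊥ : TwoSidedIdeal R).jacobson.mul_mem_left z x hx))
  have hz' : 1 + -(z * x) = z := by rw [← sub_eq_add_neg, sub_eq_iff_eq_add, ← mul_one_add, hz]
  rw [hz'] at hw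
  exact isUnit_iff_exists.2 ⟨z, left_inv_eq_right_inv hw hz ▸ hw, hz⟩

theorem TwoSidedIdeal.mem_jacobson_bot_of_forall_isUnit_one_add_mul {x : R}
    (h : ∀ y, IsUnit (1 + y * x)) : x ∈ (⊥ : TwoSidedIdeal R).jacobson := by
  refine TwoSidedIdeal.mem_jacobson_iff.2 fun y ↦ ⟨↑(h y).unit⁻¹, ?_⟩
  rw [TwoSidedIdeal.mem_bot, sub_eq_zero, mul_assoc, add_comm, ← mul_one_add]
  exact (h y).val_inv_mul

theorem isLocalHom_of_ker_le_jacobson_bot {S : Type*} [Ring S] (f : R →+* S)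
    (hf : Function.Surjective f) (hker : TwoSidedIdeal.ker f ≤ (⊥ : TwoSidedIdeal R).jacobson) :
    IsLocalHom f := by
  refine ⟨fun x hx ↦ ?_⟩
  obtain ⟨y', hxy, hyx⟩ := isUnit_iff_exists.1 hx
  obtain ⟨y, rfl⟩ := hf y'
  have unit_of_map_eq_one : ∀ r, f r = 1 → IsUnit r := fun r hr ↦ by
    simpa using TwoSidedIdeal.isUnit_one_add_of_mem_jacobson_bot
      (hker (x := r - 1) (by simp [TwoSidedIdeal.mem_ker, hr]))
  obtain ⟨u, hu⟩ := unit_of_map_eq_one (x * y) (by rw [map_mul, hxy])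
  obtain ⟨v, hv⟩ := unit_of_map_eq_one (y * x) (by rw [map_mul, hyx])
  refine isUnit_iff_exists_and_exists.2 ⟨⟨y * ↑u⁻¹, ?_⟩, ⟨↑v⁻¹ * y, ?_⟩⟩
  · rw [← mul_assoc, ← hu, Units.mul_inv]
  · rw [mul_assoc, ← hv, Units.inv_mul]

theorem TwoSidedIdeal.ker_mapMatrix {S : Type*} [Ring S] (n : Type*) [Fintype n] [DecidableEq n]
    (f : R →+* S) : TwoSidedIdeal.ker (f.mapMatrix (m := n)) = (TwoSidedIdeal.ker f).matrix n := by
  ext M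
  simp [TwoSidedIdeal.mem_ker, ← Matrix.ext_iff]

theorem isUnit_and_mem_jacobson_bot_of_forall_isUnit_sub_mul {α β : R}
    (h : ∀ t, IsUnit (α - β * t)) : IsUnit α ∧ β ∈ (⊥ : TwoSidedIdeal R).jacobson := by
  have hα : IsUnit α := by simpa using h 0
  refine ⟨hα, TwoSidedIdeal.mem_jacobson_bot_of_forall_isUnit_one_add_mul fun y ↦ ?_⟩
  have hfac : α - β * -(y * α) = (1 - β * -y) * α := by noncomm_ring
  have := h (-(y * α))
  rw [hfac, ← hα.unit_spec, Units.isUnit_mul_units] at this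
  simpa using isUnit_one_sub_mul_comm this

end Jacobson

theorem Matrix.map_surjective {m n α β : Type*} {f : α → β} (hf : Function.Surjective f) :
    Function.Surjective fun M : Matrix m n α ↦ M.map f :=
  fun M ↦ ⟨M.map (Function.surjInv hf), by ext; simp [Function.surjInv_eq hf]⟩

section FinTwo
variable {R : Type*} [Ring R]

theorem eq_one_of_smul_eq_self {n : Type*} [Fintype n] {v w : n → R} (hvw : v ⬝ᵥ w = 1) {r : R}
    (h : r • v = v) : r = 1 := by
  rw [← mul_one r, ← hvw, ← smul_eq_mul, ← smul_dotProduct, h]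

theorem isUnit_fin_two_diag {u v : R} (hu : IsUnit u) (hv : IsUnit v) : IsUnit !![u, 0; 0, v] := by
  obtain ⟨u, rfl⟩ := hu
  obtain ⟨v, rfl⟩ := hv
  refine isUnit_iff_exists.2 ⟨!![↑u⁻¹, 0; 0, ↑v⁻¹], ?_, ?_⟩ <;> simp [one_fin_two]

theorem isUnit_swap_fin_two : IsUnit !![(0 : R), 1; 1, 0] :=
  isUnit_iff_exists.2 ⟨!![0, 1; 1, 0], by simp [one_fin_two], by simp [one_fin_two]⟩

theorem isUnit_sub_mul_of_isUnit_fin_two {t x y : R} (h : IsUnit !![t, 1; x, y]) :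
    IsUnit (x - y * t) := by
  have hL : IsUnit !![(1 : R), 0; -y, 1] :=
    isUnit_iff_exists.2 ⟨!![1, 0; y, 1], by simp [one_fin_two], by simp [one_fin_two]⟩
  have hE : IsUnit !![(0 : R), 1; 1, -t] :=
    isUnit_iff_exists.2 ⟨!![t, 1; 1, 0], by simp [one_fin_two], by simp [one_fin_two]⟩
  have hD : !![(1 : R), 0; -y, 1] * !![t, 1; x, y] * !![0, 1; 1, -t] =
      !![1, 0; 0, x - y * t] := by
    simp [sub_eq_add_neg, add_comm]
  obtain ⟨N, hN₁, hN₂⟩ := isUnit_iff_exists.1 (hD ▸ (hL.mul h).mul hE)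
  refine isUnit_iff_exists.2 ⟨N 1 1, ?_, ?_⟩
  · simpa [Matrix.mul_apply] using congrFun₂ hN₁ 1 1
  · simpa [Matrix.mul_apply] using congrFun₂ hN₂ 1 1

theorem exists_eq_add_mul_of_isUnit_fin_two {a b a₂ b₂ : R} (hM : IsUnit !![a, b; a₂, b₂])
    (c d : R) : ∃ α β, c = α * a + β * a₂ ∧ d = α * b + β * b₂ := by
  obtain ⟨W, -, hW⟩ := isUnit_iff_exists.1 hM
  have hcd := congrArg (vecMul ![c, d]) hW
  rw [← vecMul_vecMul, vecMul_one] at hcd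
  refine ⟨(![c, d] ᵥ* W) 0, (![c, d] ᵥ* W) 1, ?_, ?_⟩
  · simpa [vecMul, dotProduct] using (congrFun hcd 0).symm
  · simpa [vecMul, dotProduct] using (congrFun hcd 1).symm

end FinTwo

section ProjLine
variable {R : Type*} [Ring R]

theorem admissible_iff_exists_isUnit {a b : R} :
    Admissible a b ↔ ∃ a₂ b₂, IsUnit !![a, b; a₂, b₂] := by
  constructor
  · rintro ⟨M, hM, rfl, rfl⟩
    exact ⟨M 1 0, M 1 1, Matrix.eta_fin_two M ▸ hM⟩
  · rintro ⟨a₂, b₂, hM⟩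
    exact ⟨_, hM, rfl, rfl⟩

theorem admissible_of_isUnit_fin_two {a b c d : R} (h : IsUnit !![a, b; c, d]) :
    Admissible a b ∧ Admissible c d := by
  refine ⟨admissible_iff_exists_isUnit.2 ⟨c, d, h⟩, admissible_iff_exists_isUnit.2 ⟨a, b, ?_⟩⟩
  simpa using isUnit_swap_fin_two.mul h

theorem Admissible.map {S : Type*} [Ring S] (f : R →+* S) {a b : R} (h : Admissible a b) :
    Admissible (f a) (f b) := by
  obtain ⟨M, hM, rfl, rfl⟩ := h
  exact ⟨f.mapMatrix M, hM.map _, rfl, rfl⟩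

theorem Admissible.exists_dotProduct_eq_one {a b : R} (h : Admissible a b) :
    ∃ w, ![a, b] ⬝ᵥ w = 1 := by
  obtain ⟨M, ⟨u, rfl⟩, rfl, rfl⟩ := h
  refine ⟨fun i ↦ (↑u⁻¹ : Matrix (Fin 2) (Fin 2) R) i 0, ?_⟩
  simpa [Matrix.mul_apply, dotProduct] using congrFun₂ u.mul_inv 0 0

theorem pt_mul_left {u : R} (hu : IsUnit u) (a b : R) : pt R (u * a) (u * b) = pt R a b := by
  simpa [pt] using Submodule.span_singleton_smul_eq hu ![a, b]

theorem Admissible.exists_unit_of_pt_eq {a b a' b' : R} (h : Admissible a b)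
    (h' : Admissible a' b') (hpt : pt R a b = pt R a' b') :
    ∃ u : Rˣ, a' = u * a ∧ b' = u * b := by
  have mem_pt : ∀ x y : R, ![x, y] ∈ pt R x y := fun x y ↦ Submodule.mem_span_singleton_self _
  obtain ⟨s, hs⟩ := Submodule.mem_span_singleton.1 (hpt ▸ mem_pt a' b')
  obtain ⟨t, ht⟩ := Submodule.mem_span_singleton.1 (hpt ▸ mem_pt a b)
  obtain ⟨w, hw⟩ := h.exists_dotProduct_eq_one
  obtain ⟨w', hw'⟩ := h'.exists_dotProduct_eq_one
  have hts : t * s = 1 := eq_one_of_smul_eq_self hw (by rw [mul_smul, hs, ht])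
  have hst : s * t = 1 := eq_one_of_smul_eq_self hw' (by rw [mul_smul, ht, hs])
  refine ⟨⟨s, t, hst, hts⟩, ?_, ?_⟩
  · simpa using (congrFun hs 0).symm
  · simpa using (congrFun hs 1).symm

theorem distant_pt_iff {a b c d : R} (hab : Admissible a b) (hcd : Admissible c d) :
    Distant (pt R a b) (pt R c d) ↔ IsUnit !![a, b; c, d] := by
  refine ⟨?_, fun h ↦ ⟨a, b, c, d, rfl, rfl, h⟩⟩
  rintro ⟨a', b', c', d', h₁, h₂, h⟩
  obtain ⟨hab', hcd'⟩ := admissible_of_isUnit_fin_two h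
  obtain ⟨u, rfl, rfl⟩ := hab'.exists_unit_of_pt_eq hab h₁.symm
  obtain ⟨v, rfl, rfl⟩ := hcd'.exists_unit_of_pt_eq hcd h₂.symm
  simpa using (isUnit_fin_two_diag u.isUnit v.isUnit).mul h

theorem RadParallel.isUnit_fin_two_s6 {a b a₂ b₂ α β : R} (hM : IsUnit !![a, b; a₂, b₂])
    (hq : Admissible (α * a + β * a₂) (α * b + β * b₂))
    (hpar : RadParallel (pt R a b) (pt R (α * a + β * a₂) (α * b + β * b₂))) (t : R) :
    IsUnit !![t, 1; α, β] := by
  have hE : IsUnit !![t, (1 : R); 1, 0] :=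
    isUnit_iff_exists.2 ⟨!![0, 1; 1, -t], by simp [one_fin_two], by simp [one_fin_two]⟩
  have hx : IsUnit !![t * a + a₂, t * b + b₂; a, b] := by simpa using hE.mul hM
  have hx' := admissible_of_isUnit_fin_two hx
  have hxq := (distant_pt_iff hx'.1 hq).1
    (hpar _ ⟨_, _, hx'.1, rfl⟩ ((distant_pt_iff hx'.1 hx'.2).2 hx))
  have hfac : !![t, 1; α, β] * !![a, b; a₂, b₂] =
      !![t * a + a₂, t * b + b₂; α * a + β * a₂, α * b + β * b₂] := by simp
  rw [← hfac, ← hM.unit_spec] at hxq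
  exact (Units.isUnit_mul_units _ _).1 hxq

theorem radQuotMk_surjective : Function.Surjective (radQuotMk R) :=
  RingCon.mk'_surjective _

theorem ker_radQuotMk : TwoSidedIdeal.ker (radQuotMk R) = (⊥ : TwoSidedIdeal R).jacobson :=
  TwoSidedIdeal.ker_ringCon_mk' _

instance : IsLocalHom (radQuotMk R) :=
  isLocalHom_of_ker_le_jacobson_bot _ radQuotMk_surjective ker_radQuotMk.le

instance {n : Type*} [Fintype n] [DecidableEq n] :
    IsLocalHom ((radQuotMk R).mapMatrix (m := n)) := by
  refine isLocalHom_of_ker_le_jacobson_bot _ (Matrix.map_surjective radQuotMk_surjective) ?_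
  rw [TwoSidedIdeal.ker_mapMatrix, ker_radQuotMk, TwoSidedIdeal.matrix_jacobson_bot]

theorem isUnit_fin_two_of_radQuot_pt_eq {a b c d e f : R} (hab : Admissible a b)
    (hcd : Admissible c d)
    (heq : pt (RadQuot R) (radQuotMk R a) (radQuotMk R b) =
      pt (RadQuot R) (radQuotMk R c) (radQuotMk R d))
    (h : IsUnit !![e, f; a, b]) : IsUnit !![e, f; c, d] := by
  obtain ⟨w, hc, hd⟩ := (hab.map (radQuotMk R)).exists_unit_of_pt_eq (hcd.map _) heq
  have hfac : (radQuotMk R).mapMatrix !![e, f; c, d] =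
      !![1, 0; 0, (w : RadQuot R)] * (radQuotMk R).mapMatrix !![e, f; a, b] := by
    ext i j; fin_cases i <;> fin_cases j <;> simp [hc, hd, vecMul, dotProduct]
  refine IsUnit.of_map (radQuotMk R).mapMatrix _ ?_
  rw [hfac]
  exact (isUnit_fin_two_diag isUnit_one w.isUnit).mul (h.map _)

end ProjLine

theorem radParallel_iff_radQuot_eq_general (R : Type*) [Ring R]
    (a b c d : R) (hab : Admissible a b) (hcd : Admissible c d) :
    RadParallel (pt R a b) (pt R c d) ↔
      pt (RadQuot R) (radQuotMk R a) (radQuotMk R b) =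
        pt (RadQuot R) (radQuotMk R c) (radQuotMk R d) := by
  constructor
  · intro hpar
    obtain ⟨a₂, b₂, hM⟩ := admissible_iff_exists_isUnit.1 hab
    obtain ⟨α, β, rfl, rfl⟩ := exists_eq_add_mul_of_isUnit_fin_two hM c d
    obtain ⟨hα, hβ⟩ := isUnit_and_mem_jacobson_bot_of_forall_isUnit_sub_mul fun t ↦
      isUnit_sub_mul_of_isUnit_fin_two (hpar.isUnit_fin_two_s6 hM hcd t)
    rw [← ker_radQuotMk, TwoSidedIdeal.mem_ker] at hβ
    simpa [hβ] using (pt_mul_left (hα.map (radQuotMk R)) _ _).symm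
  · rintro heq x ⟨e, f, hef, rfl⟩ hdist
    rw [distant_pt_iff hef hab] at hdist
    rw [distant_pt_iff hef hcd]
    exact isUnit_fin_two_of_radQuot_pt_eq hab hcd heq hdist

/-- Theorem 2: two points `p = R(a,b)` and `q = R(c,d)` of the projective line over `R`
are radically parallel iff their images under the canonical map
`P(R) → P(R/rad R)`, `R(a,b) ↦ (R/rad R)(ā, b̄)`, coincide. -/
theorem radParallel_iff_radQuot_eq (R : Type*) [Ring R] [Nontrivial R]
    (a b c d : R) (hab : Admissible a b) (hcd : Admissible c d) :
    RadParallel (pt R a b) (pt R c d) ↔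
      pt (RadQuot R) (radQuotMk R a) (radQuotMk R b) =
        pt (RadQuot R) (radQuotMk R c) (radQuotMk R d) :=
  radParallel_iff_radQuot_eq_general R a b c d hab hcd
end

section
/- On the projective line over a ring R, the neighbourhood of a point p in the distant graph cannot be a proper subset of the neighbourhood of another point q; that is, if every point distant to p is distant to q, then every point distant to q is distant to p. -/
/-
Right multiplication by `g ∈ GL₂(R)` preserves distance. If `p` and `q` have a common neighbour
`r`, some `g` swaps them: move `r` and `p` to `R(1,0)` and `R(0,1)`; then `q` becomes some
`R(e,1)`, and the involution `[[1,0],[-e,-1]]` exchanges `R(0,1)` and `R(e,1)`. Such an `r`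
exists, since `p` has a neighbour and `N(p) ⊆ N(q)`. Applying `g` to `N(p) ⊆ N(q)` then gives
`N(q) ⊆ N(p)`.
-/

open Matrix

section

variable {R : Type*} [Ring R]

theorem Matrix.isUnit_one_one_of_isUnit_of_zero_one_eq_zero {M : Matrix (Fin 2) (Fin 2) R}
    (hM : IsUnit M) (h01 : M 0 1 = 0) {t : R} (ht : t * M 0 0 = 1) : IsUnit (M 1 1) := by
  obtain ⟨X, hMX, hXM⟩ := isUnit_iff_exists.1 hM
  have hMX01 : M 0 0 * X 0 1 = 0 := by
    simpa [mul_apply, h01] using congrFun (congrFun hMX 0) 1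
  have hX01 : X 0 1 = 0 := by
    rw [← one_mul (X 0 1), ← ht, mul_assoc, hMX01, mul_zero]
  have hr : M 1 1 * X 1 1 = 1 := by
    simpa [mul_apply, hX01] using congrFun (congrFun hMX 1) 1
  have hl : X 1 1 * M 1 1 = 1 := by
    simpa [mul_apply, h01] using congrFun (congrFun hXM 1) 1
  exact isUnit_iff_exists.2 ⟨_, hr, hl⟩

theorem pt_eq_span_singleton (v : Fin 2 → R) : pt R (v 0) (v 1) = R ∙ v := by
  rw [pt]
  congr
  ext j; fin_cases j <;> rfl

theorem ProjLine.mem_iff {x : Submodule R (Fin 2 → R)} :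
    x ∈ ProjLine R ↔ ∃ M : Matrix (Fin 2) (Fin 2) R, IsUnit M ∧ x = R ∙ M 0 := by
  constructor
  · rintro ⟨a, b, ⟨M, hM, rfl, rfl⟩, rfl⟩
    exact ⟨M, hM, pt_eq_span_singleton (M 0)⟩
  · rintro ⟨M, hM, rfl⟩
    exact ⟨M 0 0, M 0 1, ⟨M, hM, rfl, rfl⟩, (pt_eq_span_singleton (M 0)).symm⟩

theorem distant_iff {x y : Submodule R (Fin 2 → R)} :
    Distant x y ↔
      ∃ M : Matrix (Fin 2) (Fin 2) R, IsUnit M ∧ x = R ∙ M 0 ∧ y = R ∙ M 1 := by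
  constructor
  · rintro ⟨a, b, c, d, rfl, rfl, hM⟩
    exact ⟨_, hM, rfl, rfl⟩
  · rintro ⟨M, hM, rfl, rfl⟩
    exact ⟨M 0 0, M 0 1, M 1 0, M 1 1, (pt_eq_span_singleton (M 0)).symm,
      (pt_eq_span_singleton (M 1)).symm, M.eta_fin_two ▸ hM⟩

namespace Distant

variable {x y : Submodule R (Fin 2 → R)}

theorem mem_projLine_left (h : Distant x y) : x ∈ ProjLine R := by
  obtain ⟨M, hM, rfl, -⟩ := distant_iff.1 h
  exact ProjLine.mem_iff.2 ⟨M, hM, rfl⟩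

theorem symm (h : Distant x y) : Distant y x := by
  obtain ⟨M, hM, rfl, rfl⟩ := distant_iff.1 h
  have hswap : !![(0 : R), 1; 1, 0] * !![0, 1; 1, 0] = 1 := by
    simp [one_fin_two]
  have hswapM : IsUnit (!![0, 1; 1, 0] * M) := (isUnit_iff_exists.2 ⟨_, hswap, hswap⟩).mul hM
  refine distant_iff.2 ⟨_, hswapM, ?_, ?_⟩ <;>
  · congr; ext j; simp [mul_apply]

end Distant

namespace ProjLine

def act (g : GL (Fin 2) R) (x : Submodule R (Fin 2 → R)) : Submodule R (Fin 2 → R) :=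
  x.map (g : Matrix (Fin 2) (Fin 2) R).vecMulLinear

theorem act_span_singleton (g : GL (Fin 2) R) (v : Fin 2 → R) :
    act g (R ∙ v) = R ∙ (v ᵥ* (g : Matrix (Fin 2) (Fin 2) R)) := by
  rw [act, Submodule.map_span, Set.image_singleton, vecMulLinear_apply]

theorem act_mul (g h : GL (Fin 2) R) (x : Submodule R (Fin 2 → R)) :
    act (g * h) x = act h (act g x) := by
  rw [act, act, act, ← Submodule.map_comp]
  congr 1
  exact LinearMap.ext fun v => (vecMul_vecMul v _ _).symm

theorem act_inv_act (g : GL (Fin 2) R) (x : Submodule R (Fin 2 → R)) :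
    act g⁻¹ (act g x) = x := by
  rw [← act_mul, mul_inv_cancel, act]
  convert Submodule.map_id x
  exact LinearMap.ext fun v => vecMul_one v

end ProjLine

theorem Distant.act {x y : Submodule R (Fin 2 → R)} (h : Distant x y) (g : GL (Fin 2) R) :
    Distant (ProjLine.act g x) (ProjLine.act g y) := by
  obtain ⟨M, hM, rfl, rfl⟩ := distant_iff.1 h
  refine distant_iff.2 ⟨M * g, hM.mul g.isUnit, ?_, ?_⟩ <;>
  · rw [ProjLine.act_span_singleton]; rfl

namespace ProjLine

theorem exists_eq_span_of_distant_span_one_zero {x : Submodule R (Fin 2 → R)}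
    (h : Distant (R ∙ ![1, 0]) x) : ∃ e : R, x = R ∙ ![e, 1] := by
  obtain ⟨M, hM, h0, rfl⟩ := distant_iff.1 h
  obtain ⟨s, hs⟩ := Submodule.mem_span_singleton.1
    (h0 ▸ Submodule.mem_span_singleton_self (M 0))
  obtain ⟨t, ht⟩ := Submodule.mem_span_singleton.1
    (h0.symm ▸ Submodule.mem_span_singleton_self (![1, 0] : Fin 2 → R))
  have h01 : M 0 1 = 0 := by simpa using (congrFun hs 1).symm
  have ht0 : t * M 0 0 = 1 := by simpa using congrFun ht 0
  obtain ⟨u, hu⟩ := isUnit_one_one_of_isUnit_of_zero_one_eq_zero hM h01 ht0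
  refine ⟨↑u⁻¹ * M 1 0, ?_⟩
  rw [← Submodule.span_singleton_group_smul_eq R u⁻¹ (M 1)]
  congr
  ext j; fin_cases j <;> simp [Units.smul_def, ← hu]

theorem exists_swap_span_zero_one (e : R) :
    ∃ g : GL (Fin 2) R,
      act g (R ∙ ![0, 1]) = R ∙ ![e, 1] ∧ act g (R ∙ ![e, 1]) = R ∙ ![0, 1] := by
  have hT : !![(1 : R), 0; -e, -1] * !![1, 0; -e, -1] = 1 := by
    simp [one_fin_two]
  refine ⟨⟨_, _, hT, hT⟩, ?_, ?_⟩ <;>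
  · rw [act_span_singleton, ← Submodule.span_singleton_smul_eq isUnit_one.neg]
    congr
    ext j; fin_cases j <;> simp

theorem exists_swap_of_distant {p q r : Submodule R (Fin 2 → R)} (hp : Distant r p)
    (hq : Distant r q) : ∃ g : GL (Fin 2) R, act g p = q ∧ act g q = p := by
  obtain ⟨M, hM, rfl, rfl⟩ := distant_iff.1 hp
  set S : GL (Fin 2) R := hM.unit⁻¹
  have hrow (i : Fin 2) : act S (R ∙ M i) = R ∙ (1 : Matrix (Fin 2) (Fin 2) R) i := by
    rw [act_span_singleton]
    exact congrArg (fun N => R ∙ N i) hM.mul_val_inv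
  have h0 : act S (R ∙ M 0) = R ∙ ![1, 0] := by
    rw [hrow, one_fin_two]; rfl
  have h1 : act S (R ∙ M 1) = R ∙ ![0, 1] := by
    rw [hrow, one_fin_two]; rfl
  obtain ⟨e, he⟩ := exists_eq_span_of_distant_span_one_zero (h0 ▸ hq.act S)
  obtain ⟨T, hT1, hTe⟩ := exists_swap_span_zero_one e
  refine ⟨S * T * S⁻¹, ?_, ?_⟩
  · rw [act_mul, act_mul, h1, hT1, ← he, act_inv_act]
  · rw [act_mul, act_mul, he, hTe, ← h1, act_inv_act]

end ProjLine

end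

theorem neighbourhood_not_proper_subset_general (R : Type*) [Ring R]
    (p : Submodule R (Fin 2 → R)) (hp : p ∈ ProjLine R)
    (q : Submodule R (Fin 2 → R))
    (h : ∀ x ∈ ProjLine R, Distant x p → Distant x q) :
    ∀ x ∈ ProjLine R, Distant x q → Distant x p := by
  obtain ⟨M, hM, rfl⟩ := ProjLine.mem_iff.1 hp
  have hrp : Distant (R ∙ M 1) (R ∙ M 0) := (distant_iff.2 ⟨M, hM, rfl, rfl⟩).symm
  have hrq := h _ hrp.mem_projLine_left hrp
  obtain ⟨g, hgp, hgq⟩ := ProjLine.exists_swap_of_distant hrp hrq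
  intro x _ hxq
  have hgx : Distant (ProjLine.act g x) q := by
    have hgxp := hgq ▸ hxq.act g
    exact h _ hgxp.mem_projLine_left hgxp
  have hxp := hgx.act g⁻¹
  rwa [ProjLine.act_inv_act, ← hgp, ProjLine.act_inv_act] at hxp

/-- The neighbourhood of a point in the distant graph cannot be a proper subset of the
neighbourhood of another point: if every point distant to `p` is distant to `q`, then
every point distant to `q` is distant to `p`. -/
theorem neighbourhood_not_proper_subset (R : Type*) [Ring R] [Nontrivial R]
    (p : Submodule R (Fin 2 → R)) (hp : p ∈ ProjLine R)
    (q : Submodule R (Fin 2 → R)) (hq : q ∈ ProjLine R)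
    (h : ∀ x ∈ ProjLine R, Distant x p → Distant x q) :
    ∀ x ∈ ProjLine R, Distant x q → Distant x p :=
  neighbourhood_not_proper_subset_general R p hp q h
end
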